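/- arXiv:2302.00637 — 5 statements merged into one kernel-verified Lean document; each statement's English description precedes it below -/
import Mathlib

section
/- Let k ≥ 0 and let a_0,…,a_k and b_0,…,b_k be nonnegative integers. Let d be the cycle (a_0+3, 2,…,2 (b_0 times), a_1+3, 2,…,2 (b_1 times), …, a_k+3, 2,…,2 (b_k times)), of length n = (k+1) + Σ_i b_i, and let d′ be its dual cycle (b_0+3, 2,…,2 (a_0 times), …, b_k+3, 2,…,2 (a_k times)), of length s = (k+1) + Σ_i a_i. Then Σ_{i=0}^{n−1} d_i = 2n + s and Σ_{j=0}^{s−1} d′_j = 2s + n; consequently the charges satisfy Q(d) = 12 + (s − n), Q(d′) = 12 + (n − s), and Q(d) + Q(d′) = 24. -/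
/-- The cycle `(a₀+3, 2,…,2 (b₀ times), …, a_k+3, 2,…,2 (b_k times))` built from
nonnegative integers `a i, b i` for `i = 0, …, k`. -/
def cycleBlocks (k : ℕ) (a b : ℕ → ℕ) : List ℤ :=
  (List.range (k + 1)).flatMap fun i => ((a i : ℤ) + 3) :: List.replicate (b i) (2 : ℤ)

/-- The charge of a cycle `d` of length `n`: `Q(d) = 12 + Σ (d i − 3)`. -/
def charge (c : List ℤ) : ℤ := 12 + (c.map fun x => x - 3).sum

lemma cb_step (k : ℕ) (a b : ℕ → ℕ) :
    cycleBlocks (k + 1) a b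
      = cycleBlocks k a b ++ (((a (k+1) : ℤ) + 3) :: List.replicate (b (k+1)) (2:ℤ)) := by
  simp [cycleBlocks, List.range_succ]

lemma cb_len (k : ℕ) (a b : ℕ → ℕ) :
    (cycleBlocks k a b).length = (k + 1) + ∑ i ∈ Finset.range (k + 1), b i := by
  induction k with
  | zero => simp [cycleBlocks, List.range_succ]; omega
  | succ n ih =>
    rw [cb_step, List.length_append, ih]
    simp only [List.length_cons, List.length_replicate, Finset.sum_range_succ]
    omega

lemma cb_sum (k : ℕ) (a b : ℕ → ℕ) :
    (cycleBlocks k a b).sum = ∑ i ∈ Finset.range (k + 1), ((a i : ℤ) + 3 + 2 * b i) := by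
  induction k with
  | zero => simp [cycleBlocks, List.range_succ]; ring
  | succ n ih =>
    rw [cb_step, List.sum_append, ih]
    simp only [List.sum_cons, List.sum_replicate, smul_eq_mul, Finset.sum_range_succ]
    ring

lemma map_sub3_sum (c : List ℤ) : (c.map fun x => x - 3).sum = c.sum - 3 * c.length := by
  induction c with
  | nil => simp
  | cons x t ih => simp [ih]; ring

theorem sum_and_charge_of_dual_cycles (k : ℕ) (a b : ℕ → ℕ) :
    let d := cycleBlocks k a b
    let d' := cycleBlocks k b a
    let n : ℤ := d.length
    let s : ℤ := d'.length
    (d.length = (k + 1) + ∑ i ∈ Finset.range (k + 1), b i) ∧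
    (d'.length = (k + 1) + ∑ i ∈ Finset.range (k + 1), a i) ∧
    d.sum = 2 * n + s ∧
    d'.sum = 2 * s + n ∧
    charge d = 12 + (s - n) ∧
    charge d' = 12 + (n - s) ∧
    charge d + charge d' = 24 := by
  intro d d' n s
  have hn : n = ((k : ℤ) + 1) + ∑ i ∈ Finset.range (k + 1), (b i : ℤ) := by
    show ((cycleBlocks k a b).length : ℤ) = _
    rw [cb_len]; push_cast; ring
  have hs : s = ((k : ℤ) + 1) + ∑ i ∈ Finset.range (k + 1), (a i : ℤ) := by
    show ((cycleBlocks k b a).length : ℤ) = _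
    rw [cb_len]; push_cast; ring
  have hds : d.sum = (∑ i ∈ Finset.range (k + 1), (a i : ℤ)) + 3 * ((k:ℤ)+1)
      + 2 * ∑ i ∈ Finset.range (k + 1), (b i : ℤ) := by
    rw [show d.sum = (cycleBlocks k a b).sum from rfl, cb_sum]
    rw [Finset.sum_add_distrib, Finset.sum_add_distrib, ← Finset.mul_sum,
      Finset.sum_const, Finset.card_range, nsmul_eq_mul]
    push_cast; ring
  have hds' : d'.sum = (∑ i ∈ Finset.range (k + 1), (b i : ℤ)) + 3 * ((k:ℤ)+1)
      + 2 * ∑ i ∈ Finset.range (k + 1), (a i : ℤ) := by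
    rw [show d'.sum = (cycleBlocks k b a).sum from rfl, cb_sum]
    rw [Finset.sum_add_distrib, Finset.sum_add_distrib, ← Finset.mul_sum,
      Finset.sum_const, Finset.card_range, nsmul_eq_mul]
    push_cast; ring
  have hcd : charge d = 12 + d.sum - 3 * n := by
    rw [charge, map_sub3_sum]; ring
  have hcd' : charge d' = 12 + d'.sum - 3 * s := by
    rw [charge, map_sub3_sum]; ring
  refine ⟨cb_len k a b, cb_len k b a, ?_, ?_, ?_, ?_, ?_⟩ <;>
    linarith [hn, hs, hds, hds', hcd, hcd']
end

section
/- Let n ≥ 3 and let d_0, …, d_{n−1} be integers with d_i ≥ 2 for all i. Let M be the symmetric n×n real matrix with M_{ii} = −d_i, M_{ij} = 1 whenever j ≡ i+1 or j ≡ i−1 (mod n), and M_{ij} = 0 otherwise. Then M is negative definite if and only if d_j ≥ 3 for some j. -/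
/-!
Summing by parts around the cycle gives
`xᵀ M x = -∑ᵢ (xᵢ - xᵢ₊₁)² - ∑ᵢ (dᵢ - 2) xᵢ²`, a sum of non-positive terms when all `dᵢ ≥ 2`.
It vanishes exactly when `x` is constant and `xⱼ = 0` wherever `dⱼ > 2`. So if some `dⱼ ≥ 3` it
vanishes only at `x = 0`, while if every `dᵢ = 2` the all-ones vector is isotropic.
-/

open Finset Matrix

theorem sum_sq_sub_apply_add {G R : Type*} [AddGroup G] [Fintype G] [CommRing R] (g : G)
    (x : G → R) :
    ∑ i, (x i - x (i + g)) ^ 2 = 2 * (∑ i, x i ^ 2 - ∑ i, x i * x (i + g)) := by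
  have hshift : ∑ i, x (i + g) ^ 2 = ∑ i, x i ^ 2 := Equiv.sum_comp (Equiv.addRight g) (x · ^ 2)
  simp only [sub_sq, sum_add_distrib, sum_sub_distrib, hshift, ← mul_sum, mul_assoc]
  ring

namespace Fin

variable {n : ℕ} [NeZero n]

theorem one_ne_zero_of_two_le (hn : 2 ≤ n) : (1 : Fin n) ≠ 0 := by
  simp [Fin.ext_iff, Nat.mod_eq_of_lt (show 1 < n by omega)]

theorem two_ne_zero_of_three_le (hn : 3 ≤ n) : (2 : Fin n) ≠ 0 := by
  simp [Fin.ext_iff, Nat.mod_eq_of_lt (show 2 < n by omega)]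

theorem apply_eq_of_forall_apply_add_one {α : Type*} {x : Fin n → α}
    (h : ∀ i, x (i + 1) = x i) (i j : Fin n) : x i = x j := by
  suffices h0 : ∀ k, x k = x 0 by rw [h0, h0 j]
  obtain ⟨m, rfl⟩ := Nat.exists_eq_succ_of_ne_zero (NeZero.ne n)
  refine Fin.induction rfl fun k ih => ?_
  rw [← coeSucc_eq_succ, h, ih]

end Fin

section CyclicIntersectionMatrix

variable {n : ℕ} [NeZero n] {R : Type*}

def cyclicIntersectionMatrix [Ring R] (d : Fin n → R) : Matrix (Fin n) (Fin n) R :=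
  Matrix.of fun i j => if i = j then -d i else if j = i + 1 ∨ j + 1 = i then 1 else 0

theorem cyclicIntersectionMatrix_apply [Ring R] (hn : 3 ≤ n) (d : Fin n → R) (i j : Fin n) :
    cyclicIntersectionMatrix d i j =
      (if j = i then -d i else 0) + (if j = i + 1 then 1 else 0) +
        (if j = i - 1 then 1 else 0) := by
  have h1 : i + 1 ≠ i := add_ne_left.mpr (Fin.one_ne_zero_of_two_le (by omega))
  have h2 : i - 1 ≠ i := by
    simpa [sub_eq_add_neg] using Fin.one_ne_zero_of_two_le (n := n) (by omega)
  have h3 : i + 1 ≠ i - 1 := fun h => Fin.two_ne_zero_of_three_le hn (by grind)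
  unfold cyclicIntersectionMatrix
  simp only [Matrix.of_apply, eq_sub_iff_add_eq]
  split_ifs <;> grind

theorem cyclicIntersectionMatrix_mulVec [Ring R] (hn : 3 ≤ n) (d x : Fin n → R) (i : Fin n) :
    (cyclicIntersectionMatrix d *ᵥ x) i = -d i * x i + x (i + 1) + x (i - 1) := by
  simp [mulVec, dotProduct, cyclicIntersectionMatrix_apply hn, add_mul, ite_mul, sum_add_distrib]

theorem dotProduct_cyclicIntersectionMatrix_mulVec [CommRing R] (hn : 3 ≤ n) (d x : Fin n → R) :
    x ⬝ᵥ (cyclicIntersectionMatrix d *ᵥ x) =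
      -(∑ i, (x i - x (i + 1)) ^ 2) - ∑ i, (d i - 2) * x i ^ 2 := by
  have hshift : ∑ i, x i * x (i - 1) = ∑ i, x i * x (i + 1) := by
    simpa [mul_comm] using (Equiv.subRight (1 : Fin n)).sum_comp (fun i => x (i + 1) * x i)
  have hdiag : ∑ i, x i * (-d i * x i) = -∑ i, d i * x i ^ 2 := by
    rw [← sum_neg_distrib]
    exact sum_congr rfl fun i _ => by ring
  simp only [dotProduct, cyclicIntersectionMatrix_mulVec hn, mul_add, sum_add_distrib, hshift,
    hdiag, sum_sq_sub_apply_add, sub_mul, sum_sub_distrib, ← mul_sum]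
  ring

theorem sum_sq_sub_add_one_add_sum_mul_sq_pos [Field R] [LinearOrder R] [IsStrictOrderedRing R]
    {d x : Fin n → R} (hd : ∀ i, 2 ≤ d i) {j : Fin n} (hj : 2 < d j) (hx : x ≠ 0) :
    0 < ∑ i, (x i - x (i + 1)) ^ 2 + ∑ i, (d i - 2) * x i ^ 2 := by
  have hsq : ∀ i, 0 ≤ (x i - x (i + 1)) ^ 2 := fun i => sq_nonneg _
  have hweight : ∀ i, 0 ≤ (d i - 2) * x i ^ 2 :=
    fun i => mul_nonneg (sub_nonneg.mpr (hd i)) (sq_nonneg _)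
  refine (add_nonneg (sum_nonneg fun i _ => hsq i) (sum_nonneg fun i _ => hweight i)).lt_of_ne' ?_
  intro h0
  rw [add_eq_zero_iff_of_nonneg (sum_nonneg fun i _ => hsq i) (sum_nonneg fun i _ => hweight i),
    sum_eq_zero_iff_of_nonneg fun i _ => hsq i, sum_eq_zero_iff_of_nonneg fun i _ => hweight i] at h0
  obtain ⟨hsq0, hweight0⟩ := h0
  have hconst : ∀ i, x (i + 1) = x i :=
    fun i => (sub_eq_zero.mp (pow_eq_zero_iff two_ne_zero |>.mp (hsq0 i (mem_univ i)))).symm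
  have hxj : x j = 0 := by simpa [(sub_pos.mpr hj).ne'] using hweight0 j (mem_univ j)
  exact hx (funext fun i => (Fin.apply_eq_of_forall_apply_add_one hconst i j).trans hxj)

end CyclicIntersectionMatrix

/-- The cyclic intersection matrix of a cycle of `n ≥ 3` rational curves with
self-intersections `−dᵢ` and adjacent curves meeting once (indices mod `n`)
is negative definite iff some `d j ≥ 3`. -/
theorem cyclic_intersection_matrix_negDef_iff
    (n : ℕ) [NeZero n] (hn : 3 ≤ n) (d : Fin n → ℤ) (h2 : ∀ i, 2 ≤ d i) :
    (∀ x : Fin n → ℝ, x ≠ 0 →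
        dotProduct x ((Matrix.of fun i j : Fin n =>
          if i = j then -(d i : ℝ) else if j = i + 1 ∨ j + 1 = i then 1 else 0).mulVec x) < 0)
      ↔ ∃ j, 3 ≤ d j := by
  change (∀ x : Fin n → ℝ, x ≠ 0 → x ⬝ᵥ (cyclicIntersectionMatrix (d ·) *ᵥ x) < 0) ↔ _
  simp only [dotProduct_cyclicIntersectionMatrix_mulVec hn]
  constructor
  · intro hneg
    by_contra! hd
    have hd2 : ∀ i, (d i : ℝ) = 2 := fun i => by
      have := hd i
      have := h2 i
      norm_cast
      omega
    simpa [hd2] using hneg 1 one_ne_zero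
  · rintro ⟨j, hj⟩ x hx
    have hpos := sum_sq_sub_add_one_add_sum_mul_sq_pos
      (fun i => (by exact_mod_cast h2 i : (2 : ℝ) ≤ d i)) (by exact_mod_cast hj : (2 : ℝ) < d j) hx
    linarith
end

section
/- Let n ≥ 1 and let d_0, …, d_{n−1} be integers with d_i ≥ 2 for all i and d_j ≥ 3 for some j. Then the monodromy matrix σ(d) = [[0,−1],[1,d_{n−1}]] · [[0,−1],[1,d_{n−2}]] ⋯ [[0,−1],[1,d_0]] lies in SL₂(ℤ) and has trace strictly greater than 2 (i.e., σ(d) is a hyperbolic element of SL₂(ℤ)). -/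
/-!
In the basis `(1, 0), (-1, 1)` of `ℤ²` the factor `[[0,-1],[1,d]]` becomes `[[1, d-2],[1, d-1]]`,
which has nonnegative entries when `d ≥ 2`. Left multiplication by it keeps a matrix with
nonnegative entries and lower right entry `≥ 1` in that class and raises its trace by at least
`d - 2`. Starting from the identity, the trace of `σ(d)` is therefore at least `2 + ∑ (dᵢ - 2)`.
-/

/-- The monodromy matrix `σ(d) = [[0,−1],[1,d_{n−1}]] ⋯ [[0,−1],[1,d₀]]` of a cycle
`(d₀, …, d_{n−1})`. -/
def monodromy (n : ℕ) (d : ℕ → ℤ) : Matrix (Fin 2) (Fin 2) ℤ :=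
  (List.range n).foldl (fun A i => !![0, -1; 1, d i] * A) 1

open Matrix Finset

section Monodromy

variable (d : ℕ → ℤ)

lemma monodromy_zero : monodromy 0 d = 1 := rfl

lemma monodromy_succ (n : ℕ) : monodromy (n + 1) d = !![0, -1; 1, d n] * monodromy n d := by
  simp [monodromy, List.range_succ]

lemma det_monodromy (n : ℕ) : (monodromy n d).det = 1 := by
  induction n with
  | zero => simp [monodromy_zero]
  | succ n ih => rw [monodromy_succ, det_mul, ih, det_fin_two_of]; norm_num

lemma shear_neg_mul_shear :
    !![1, -1; 0, 1] * !![1, 1; 0, 1] = (1 : Matrix (Fin 2) (Fin 2) ℤ) := by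
  simp [one_fin_two]

def conjMonodromy (n : ℕ) : Matrix (Fin 2) (Fin 2) ℤ :=
  !![1, 1; 0, 1] * monodromy n d * !![1, -1; 0, 1]

lemma conjMonodromy_zero : conjMonodromy d 0 = 1 := by
  simp [conjMonodromy, monodromy_zero, one_fin_two]

lemma conjMonodromy_succ (n : ℕ) :
    conjMonodromy d (n + 1) = !![1, d n - 2; 1, d n - 1] * conjMonodromy d n := by
  have hfactor : !![1, 1; 0, 1] * !![0, -1; 1, d n] * !![1, -1; 0, 1] =
      !![1, d n - 2; 1, d n - 1] := by
    rw [mul_fin_two, mul_fin_two]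
    norm_num
    constructor <;> ring
  rw [conjMonodromy, conjMonodromy, monodromy_succ, ← hfactor]
  simp only [Matrix.mul_assoc, ← Matrix.mul_assoc !![1, -1; 0, 1], shear_neg_mul_shear,
    Matrix.one_mul]

lemma trace_conjMonodromy (n : ℕ) : (conjMonodromy d n).trace = (monodromy n d).trace := by
  rw [conjMonodromy, trace_mul_comm, ← Matrix.mul_assoc, shear_neg_mul_shear, Matrix.one_mul]

end Monodromy

def IsNonnegUnitCorner (N : Matrix (Fin 2) (Fin 2) ℤ) : Prop :=
  0 ≤ N 0 0 ∧ 0 ≤ N 0 1 ∧ 0 ≤ N 1 0 ∧ 1 ≤ N 1 1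

namespace IsNonnegUnitCorner

variable {N : Matrix (Fin 2) (Fin 2) ℤ} {c : ℤ}

lemma one : IsNonnegUnitCorner 1 := by
  simp [IsNonnegUnitCorner]

lemma mul_step (hN : IsNonnegUnitCorner N) (hc : 2 ≤ c) :
    IsNonnegUnitCorner (!![1, c - 2; 1, c - 1] * N) := by
  obtain ⟨h00, h01, h10, h11⟩ := hN
  simp only [IsNonnegUnitCorner, mul_apply, Fin.sum_univ_two, of_apply, cons_val', cons_val_zero,
    cons_val_one, empty_val', cons_val_fin_one]
  refine ⟨?_, ?_, ?_, ?_⟩ <;> nlinarith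

lemma trace_add_le_trace_mul_step (hN : IsNonnegUnitCorner N) (hc : 2 ≤ c) :
    N.trace + (c - 2) ≤ (!![1, c - 2; 1, c - 1] * N).trace := by
  obtain ⟨h00, h01, h10, h11⟩ := hN
  simp only [trace_fin_two, mul_apply, Fin.sum_univ_two, of_apply, cons_val', cons_val_zero,
    cons_val_one, empty_val', cons_val_fin_one]
  nlinarith

end IsNonnegUnitCorner

lemma isNonnegUnitCorner_conjMonodromy_and_trace_ge (n : ℕ) (d : ℕ → ℤ)
    (h2 : ∀ i, i < n → 2 ≤ d i) :
    IsNonnegUnitCorner (conjMonodromy d n) ∧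
      2 + ∑ i ∈ range n, (d i - 2) ≤ (conjMonodromy d n).trace := by
  induction n with
  | zero => simp [conjMonodromy_zero, IsNonnegUnitCorner.one]
  | succ n ih =>
    obtain ⟨hN, htr⟩ := ih fun i hi => h2 i (hi.trans n.lt_succ_self)
    have hdn := h2 n n.lt_succ_self
    rw [conjMonodromy_succ, sum_range_succ]
    exact ⟨hN.mul_step hdn, by linarith [hN.trace_add_le_trace_mul_step hdn]⟩

theorem two_add_sum_le_trace_monodromy (n : ℕ) (d : ℕ → ℤ) (h2 : ∀ i, i < n → 2 ≤ d i) :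
    2 + ∑ i ∈ range n, (d i - 2) ≤ (monodromy n d).trace :=
  trace_conjMonodromy d n ▸ (isNonnegUnitCorner_conjMonodromy_and_trace_ge n d h2).2

theorem monodromy_mem_SL2_and_trace_gt_two_general
    (n : ℕ) (d : ℕ → ℤ)
    (h2 : ∀ i, i < n → 2 ≤ d i) (h3 : ∃ j, j < n ∧ 3 ≤ d j) :
    (monodromy n d).det = 1 ∧ 2 < Matrix.trace (monodromy n d) := by
  refine ⟨det_monodromy d n, ?_⟩
  obtain ⟨j, hj, hdj⟩ := h3
  have hsum : d j - 2 ≤ ∑ i ∈ range n, (d i - 2) :=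
    single_le_sum (fun i hi => sub_nonneg.2 (h2 i (mem_range.1 hi))) (mem_range.2 hj)
  linarith [two_add_sum_le_trace_monodromy n d h2]

theorem monodromy_mem_SL2_and_trace_gt_two
    (n : ℕ) (hn : 1 ≤ n) (d : ℕ → ℤ)
    (h2 : ∀ i, i < n → 2 ≤ d i) (h3 : ∃ j, j < n ∧ 3 ≤ d j) :
    (monodromy n d).det = 1 ∧ 2 < Matrix.trace (monodromy n d) :=
  monodromy_mem_SL2_and_trace_gt_two_general n d h2 h3
end

section
/- Let n ≥ 1 and let d : ℤ → ℤ be an n-periodic sequence of integers with d_i ≥ 2 for all i and d_j ≥ 3 for some j. Then there exists a unique n-periodic sequence of real numbers (ω_i)_{i∈ℤ} with ω_i > 1 for all i and ω_i = d_i − 1/ω_{i+1} for all i. Moreover each ω_i is irrational. -/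
/-!
Existence: the finite truncations `dᵢ - 1/(dᵢ₊₁ - ⋯ - 1/dᵢ₊ₘ)` decrease in `m` and stay `≥ 1`
(because `d ≥ 2`), so they converge to a periodic solution with `ω ≥ 1`. If `ωᵢ = 1`, the
recursion forces `dᵢ = 2` and `ωᵢ₊₁ = 1`, hence `d = 2` from `i` on, which periodicity and
`d_j ≥ 3` forbid.

Uniqueness: for two solutions the gaps `δᵢ = |ωᵢ - ω'ᵢ|` satisfy `δᵢ = δᵢ₊₁ / (ωᵢ₊₁ ω'ᵢ₊₁)`,
so `δ` is nondecreasing; being periodic it is constant, and `δ = δ / (ω ω')` with `ω ω' > 1`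
forces `δ = 0`.

Irrationality: if `ωᵢ = p/q`, then `ωᵢ₊₁ = 1/(dᵢ - p/q)` with `0 < dᵢ - p/q < 1` has
a smaller denominator, an infinite descent.
-/

open Filter Topology Function

theorem Function.Periodic.exists_nat_add_eq {α : Type*} {f : ℤ → α} {c : ℤ} (hf : Periodic f c)
    (hc : 0 < c) (i j : ℤ) : ∃ k : ℕ, f (i + k) = f j := by
  obtain ⟨y, ⟨hiy, -⟩, hy⟩ := hf.exists_mem_Ico hc j i
  exact ⟨(y - i).toNat, by rw [Int.toNat_of_nonneg (by omega), add_sub_cancel, hy]⟩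

namespace MinusContinuedFraction

noncomputable def step (a ω : ℤ → ℝ) : ℤ → ℝ := fun i => a i - 1 / ω (i + 1)

section Truncations

variable {a : ℤ → ℝ}

theorem one_le_step (ha : ∀ i, 2 ≤ a i) {ω : ℤ → ℝ} (hω : ∀ i, 1 ≤ ω i) (i : ℤ) :
    1 ≤ step a ω i := by
  have : 1 / ω (i + 1) ≤ 1 := (div_le_one (by linarith [hω (i + 1)])).2 (hω (i + 1))
  linarith [ha i, show step a ω i = a i - 1 / ω (i + 1) from rfl]

theorem step_le_step {ω ω' : ℤ → ℝ} (hpos : ∀ i, 0 < ω i) (hle : ω ≤ ω') : step a ω ≤ step a ω' :=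
  fun i => sub_le_sub_left (one_div_le_one_div_of_le (hpos (i + 1)) (hle (i + 1))) _

theorem one_le_step_iterate (ha : ∀ i, 2 ≤ a i) (m : ℕ) (i : ℤ) : 1 ≤ (step a)^[m] a i := by
  induction m generalizing i with
  | zero => linarith [ha i, show (step a)^[0] a i = a i from rfl]
  | succ m ih => rw [iterate_succ_apply']; exact one_le_step ha ih i

theorem antitone_step_iterate (ha : ∀ i, 2 ≤ a i) : Antitone fun m => (step a)^[m] a := by
  refine antitone_nat_of_succ_le fun m => ?_
  induction m with
  | zero => exact fun i => sub_le_self _ (one_div_nonneg.2 (by linarith [ha (i + 1)]))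
  | succ m ih =>
    simp only [iterate_succ_apply'] at ih ⊢
    exact step_le_step (fun i => by linarith [one_le_step ha (one_le_step_iterate ha m) i]) ih

theorem periodic_step {c : ℤ} {ω : ℤ → ℝ} (ha : Periodic a c) (hω : Periodic ω c) :
    Periodic (step a ω) c := fun i => by
  simp only [step, ha i, add_right_comm i c 1, hω (i + 1)]

end Truncations

/-- The minus continued fraction `aᵢ - 1/(aᵢ₊₁ - 1/(aᵢ₊₂ - ⋯))`, as the limit of its
decreasing truncations. -/
noncomputable def value (a : ℤ → ℝ) (i : ℤ) : ℝ := ⨅ m, (step a)^[m] a i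

section Value

variable {a : ℤ → ℝ}

theorem tendsto_step_iterate_value (ha : ∀ i, 2 ≤ a i) (i : ℤ) :
    Tendsto (fun m => (step a)^[m] a i) atTop (𝓝 (value a i)) :=
  tendsto_atTop_ciInf (fun _ _ hmn => antitone_step_iterate ha hmn i)
    ⟨1, by rintro _ ⟨m, rfl⟩; exact one_le_step_iterate ha m i⟩

theorem one_le_value (ha : ∀ i, 2 ≤ a i) (i : ℤ) : 1 ≤ value a i :=
  le_ciInf fun m => one_le_step_iterate ha m i

theorem value_eq (ha : ∀ i, 2 ≤ a i) (i : ℤ) : value a i = a i - 1 / value a (i + 1) := by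
  have hne : value a (i + 1) ≠ 0 := by linarith [one_le_value ha (i + 1)]
  refine tendsto_nhds_unique ((tendsto_step_iterate_value ha i).comp (tendsto_add_atTop_nat 1)) ?_
  simp only [comp_def, iterate_succ_apply']
  exact tendsto_const_nhds.sub (tendsto_const_nhds.div (tendsto_step_iterate_value ha _) hne)

theorem periodic_value {c : ℤ} (ha : Periodic a c) : Periodic (value a) c := by
  have hiter : ∀ m, Periodic ((step a)^[m] a) c := fun m => by
    induction m with
    | zero => exact ha
    | succ m ih => rw [iterate_succ_apply']; exact periodic_step ha ih
  exact fun i => iInf_congr fun m => hiter m i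

end Value

section Solutions

variable {a ω ω' : ℤ → ℝ}

theorem eq_two_and_eq_one_of_eq_one (ha : ∀ i, 2 ≤ a i) (hω1 : ∀ i, 1 ≤ ω i)
    (hω : ∀ i, ω i = a i - 1 / ω (i + 1)) {i : ℤ} (hi : ω i = 1) :
    a i = 2 ∧ ω (i + 1) = 1 := by
  have hpos : 0 < ω (i + 1) := by linarith [hω1 (i + 1)]
  have hinv : 1 / ω (i + 1) ≤ 1 := (div_le_one hpos).2 (hω1 (i + 1))
  have hinv_eq : 1 / ω (i + 1) = 1 := by linarith [hω i, ha i]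
  exact ⟨by linarith [hω i], ((div_eq_one_iff_eq hpos.ne').1 hinv_eq).symm⟩

theorem one_lt_of_one_le (ha : ∀ i, 2 ≤ a i) (hfreq : ∀ i, ∃ k : ℕ, 2 < a (i + k))
    (hω1 : ∀ i, 1 ≤ ω i) (hω : ∀ i, ω i = a i - 1 / ω (i + 1)) (i : ℤ) : 1 < ω i := by
  refine (hω1 i).lt_of_ne fun hi => ?_
  have hone : ∀ k : ℕ, ω (i + k) = 1 := fun k => by
    induction k with
    | zero => simpa using hi.symm
    | succ k ih =>
      rw [Nat.cast_succ, ← add_assoc]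
      exact (eq_two_and_eq_one_of_eq_one ha hω1 hω ih).2
  obtain ⟨k, hk⟩ := hfreq i
  linarith [(eq_two_and_eq_one_of_eq_one ha hω1 hω (hone k)).1]

theorem eq_of_periodic {n : ℕ} (hn : 1 ≤ n) (hωp : Periodic ω n) (hω'p : Periodic ω' n)
    (hω1 : ∀ i, 1 < ω i) (hω'1 : ∀ i, 1 < ω' i)
    (hω : ∀ i, ω i = a i - 1 / ω (i + 1)) (hω' : ∀ i, ω' i = a i - 1 / ω' (i + 1)) :
    ω = ω' := by
  set δ : ℤ → ℝ := fun i => |ω i - ω' i|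
  have hprod : ∀ i, 1 < ω i * ω' i := fun i => one_lt_mul_of_lt_of_le (hω1 i) (hω'1 i).le
  have hδ : ∀ i, δ i = δ (i + 1) / (ω (i + 1) * ω' (i + 1)) := fun i => by
    have h0 : ω (i + 1) ≠ 0 := by linarith [hω1 (i + 1)]
    have h0' : ω' (i + 1) ≠ 0 := by linarith [hω'1 (i + 1)]
    have hdiff : ω i - ω' i = (ω (i + 1) - ω' (i + 1)) / (ω (i + 1) * ω' (i + 1)) := by
      rw [hω i, hω' i]; field_simp; ring
    simp only [δ]
    rw [hdiff, abs_div, abs_of_pos (zero_lt_one.trans (hprod (i + 1)))]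
  have hmono : Monotone δ := monotone_int_of_le_succ fun i => by
    rw [hδ i]; exact div_le_self (abs_nonneg _) (hprod (i + 1)).le
  have hδp : Periodic δ n := fun i => by simp only [δ, hωp i, hω'p i]
  funext i
  have hsucc : δ (i + 1) = δ i :=
    le_antisymm (hδp i ▸ hmono (by omega)) (hmono (by omega))
  have hzero : δ i = 0 := by
    by_contra h0
    have h := hδ i
    rw [hsucc, eq_div_iff (zero_lt_one.trans (hprod (i + 1))).ne', mul_eq_left₀ h0] at h
    exact (hprod (i + 1)).ne' h
  exact sub_eq_zero.1 (abs_eq_zero.1 hzero)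

end Solutions

section Integer

variable {d : ℤ → ℤ} {ω : ℤ → ℝ}

theorem exists_rat_den_lt (hω1 : ∀ i, 1 < ω i) (hω : ∀ i, ω i = d i - 1 / ω (i + 1))
    {i : ℤ} {r : ℚ} (hr : ω i = r) : ∃ s : ℚ, ω (i + 1) = s ∧ s.den < r.den := by
  set x : ℚ := d i - r
  have hx : (x : ℝ) = 1 / ω (i + 1) := by push_cast [x]; linarith [hω i]
  have hω0 : 0 < ω (i + 1) := zero_lt_one.trans (hω1 (i + 1))
  have hpos : 0 < x := by exact_mod_cast hx ▸ one_div_pos.2 hω0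
  have hlt : x < 1 := by exact_mod_cast hx ▸ (div_lt_one hω0).2 (hω1 (i + 1))
  refine ⟨x⁻¹, by rw [Rat.cast_inv, hx, one_div, inv_inv], ?_⟩
  rw [Rat.den_inv_of_ne_zero hpos.ne', ← show x.den = r.den from Rat.intCast_sub_den (d i) r]
  have := Rat.num_lt_denom_iff.2 hlt
  have := Rat.num_pos.2 hpos
  omega

theorem irrational_of_integer_coefficients (hω1 : ∀ i, 1 < ω i)
    (hω : ∀ i, ω i = d i - 1 / ω (i + 1)) (i : ℤ) : Irrational (ω i) := by
  suffices ∀ q : ℕ, ∀ (i : ℤ) (r : ℚ), r.den = q → ω i ≠ r by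
    rintro ⟨r, hr⟩; exact this _ i r rfl hr.symm
  intro q
  induction q using Nat.strong_induction_on with
  | _ q ih =>
    rintro i r rfl hr
    obtain ⟨s, hs, hden⟩ := exists_rat_den_lt hω1 hω hr
    exact ih s.den hden (i + 1) s rfl hs

end Integer

end MinusContinuedFraction

open MinusContinuedFraction in
/-- For an `n`-periodic integer sequence `d` with all `dᵢ ≥ 2` and some `d_j ≥ 3`,
there is a unique `n`-periodic real sequence `ω` with `ωᵢ > 1` and
`ωᵢ = dᵢ − 1/ω_{i+1}` for all `i`; moreover every `ωᵢ` is irrational. -/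
theorem periodic_minus_continued_fraction_exists_unique_irrational
    (n : ℕ) (hn : 1 ≤ n) (d : ℤ → ℤ)
    (hper : ∀ i : ℤ, d (i + n) = d i) (h2 : ∀ i, 2 ≤ d i) (h3 : ∃ j, 3 ≤ d j) :
    (∃! ω : ℤ → ℝ,
      (∀ i : ℤ, ω (i + n) = ω i) ∧ (∀ i, 1 < ω i) ∧
        ∀ i, ω i = (d i : ℝ) - 1 / ω (i + 1)) ∧
    ∀ ω : ℤ → ℝ,
      ((∀ i : ℤ, ω (i + n) = ω i) ∧ (∀ i, 1 < ω i) ∧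
        ∀ i, ω i = (d i : ℝ) - 1 / ω (i + 1)) →
      ∀ i, Irrational (ω i) := by
  obtain ⟨j, hj⟩ := h3
  set a : ℤ → ℝ := fun i => d i
  have ha2 : ∀ i, 2 ≤ a i := fun i => show (2 : ℝ) ≤ d i by exact_mod_cast h2 i
  have hap : Periodic a n := fun i => congrArg Int.cast (hper i)
  have hfreq : ∀ i, ∃ k : ℕ, 2 < a (i + k) := fun i => by
    obtain ⟨k, hk⟩ := hap.exists_nat_add_eq (by omega) i j
    exact ⟨k, hk ▸ show (2 : ℝ) < d j by exact_mod_cast hj⟩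
  have hval1 : ∀ i, 1 < value a i :=
    one_lt_of_one_le ha2 hfreq (one_le_value ha2) (value_eq ha2)
  refine ⟨⟨value a, ⟨periodic_value hap, hval1, value_eq ha2⟩, ?_⟩, ?_⟩
  · rintro ω ⟨hωp, hω1, hω⟩
    exact eq_of_periodic hn hωp (periodic_value hap) hω1 hval1 hω (value_eq ha2)
  · rintro ω ⟨-, hω1, hω⟩
    exact irrational_of_integer_coefficients hω1 hω
end

section
/- Let k ≥ 0 and a_0,…,a_k, b_0,…,b_k be nonnegative integers, let d = (a_0+3, 2,…,2 (b_0 times), …, a_k+3, 2,…,2 (b_k times)) be a cycle of length n and let d′ = (b_0+3, 2,…,2 (a_0 times), …, b_k+3, 2,…,2 (a_k times)) be its dual cycle, of length s. Let p be the least positive integer such that d_{i+p} = d_i for all i (indices taken modulo n), and let q be the least positive integer such that d′_{j+q} = d′_j for all j (indices modulo s). Then p divides n, q divides s, and n/p = s/q. -/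
/-- The cyclic sequence determined by a list `c` of length `n`: indices are taken
modulo `n`. -/
def cyc (c : List ℤ) : ℕ → ℤ := fun i => c.getD (i % c.length) 0

/-- The minimal period of the cyclic sequence of a list: the least `p ≥ 1` such that
shifting indices by `p` (modulo the length) fixes the sequence. -/
noncomputable def minPeriod (c : List ℤ) : ℕ :=
  sInf {p : ℕ | 0 < p ∧ ∀ i : ℕ, cyc c (i + p) = cyc c i}

namespace DualAux

/-- partial sums of block lengths -/
def pos (b : ℕ → ℕ) (j : ℕ) : ℕ := ∑ i ∈ Finset.range j, (1 + b i)

lemma pos_zero (b : ℕ → ℕ) : pos b 0 = 0 := rfl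

lemma pos_succ (b : ℕ → ℕ) (j : ℕ) : pos b (j + 1) = pos b j + (1 + b j) :=
  Finset.sum_range_succ _ _

lemma le_pos (b : ℕ → ℕ) : ∀ j, j ≤ pos b j := by
  intro j; induction j with
  | zero => simp [pos_zero]
  | succ j ih => rw [pos_succ]; omega

lemma pos_strictMono (b : ℕ → ℕ) : StrictMono (pos b) :=
  strictMono_nat_of_lt_succ (fun n => by rw [pos_succ]; omega)

lemma pos_mono (b : ℕ → ℕ) : Monotone (pos b) := (pos_strictMono b).monotone

lemma pos_add {b : ℕ → ℕ} {t : ℕ} (h : ∀ i, b (i + t) = b i) (x : ℕ) :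
    pos b (t + x) = pos b t + pos b x := by
  unfold pos
  rw [Finset.sum_range_add]
  congr 1
  exact Finset.sum_congr rfl fun i _ => by rw [Nat.add_comm t i, h i]

lemma pos_mul {b : ℕ → ℕ} {t : ℕ} (h : ∀ i, b (i + t) = b i) (m : ℕ) :
    pos b (m * t) = m * pos b t := by
  induction m with
  | zero => simp [pos_zero]
  | succ m ih =>
    have : (m + 1) * t = t + m * t := by ring
    rw [this, pos_add h, ih]; ring

lemma cycleBlocks_zero (a b : ℕ → ℕ) :
    cycleBlocks 0 a b = ((a 0 : ℤ) + 3) :: List.replicate (b 0) 2 := by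
  simp [cycleBlocks, List.range_succ]

lemma cycleBlocks_succ (k : ℕ) (a b : ℕ → ℕ) :
    cycleBlocks (k + 1) a b = (((a 0 : ℤ) + 3) :: List.replicate (b 0) 2) ++
      cycleBlocks k (fun i => a (i + 1)) (fun i => b (i + 1)) := by
  unfold cycleBlocks
  rw [List.range_succ_eq_map, List.flatMap_cons, List.flatMap_map]

lemma cycleBlocks_eq_append (k : ℕ) (a b : ℕ → ℕ) :
    ∃ rest, cycleBlocks k a b = (((a 0 : ℤ) + 3) :: List.replicate (b 0) 2) ++ rest := by
  cases k with
  | zero => exact ⟨[], by rw [cycleBlocks_zero]; simp⟩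
  | succ k => exact ⟨_, cycleBlocks_succ k a b⟩

lemma length_cycleBlocks : ∀ (k : ℕ) (a b : ℕ → ℕ),
    (cycleBlocks k a b).length = pos b (k + 1) := by
  intro k; induction k with
  | zero =>
    intro a b; rw [cycleBlocks_zero]
    simp [pos, Finset.sum_range_one]
    omega
  | succ k ih =>
    intro a b
    rw [cycleBlocks_succ, List.length_append]
    have h2 : pos b (k + 1 + 1) = (pos (fun i => b (i + 1)) (k + 1)) + (1 + b 0) :=
      Finset.sum_range_succ' _ _
    rw [ih, h2]
    simp
    omega

lemma getD_block (x : ℤ) (m : ℕ) (rest : List ℤ) (r : ℕ) (hr : r ≤ m) :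
    ((x :: List.replicate m (2 : ℤ)) ++ rest).getD r 0 = if r = 0 then x else 2 := by
  cases r with
  | zero => simp
  | succ r =>
    rw [if_neg (Nat.succ_ne_zero r), List.cons_append, List.getD_cons_succ]
    rw [List.getD_append _ _ _ _ (by simp; omega)]
    have : r < (List.replicate m (2:ℤ)).length := by simp; omega
    rw [List.getD_eq_getElem _ _ this, List.getElem_replicate]

lemma getD_cycleBlocks : ∀ (j k : ℕ) (a b : ℕ → ℕ) (r : ℕ), j ≤ k → r ≤ b j →
    (cycleBlocks k a b).getD (pos b j + r) 0 = if r = 0 then (a j : ℤ) + 3 else 2 := by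
  intro j
  induction j with
  | zero =>
    intro k a b r _ hr
    obtain ⟨rest, hrest⟩ := cycleBlocks_eq_append k a b
    rw [hrest, pos_zero, Nat.zero_add, getD_block _ _ _ _ hr]
  | succ j ih =>
    intro k a b r hk hr
    cases k with
    | zero => omega
    | succ k =>
      rw [cycleBlocks_succ]
      have hpos : pos b (j + 1) + r = (1 + b 0) + (pos (fun i => b (i + 1)) j + r) := by
        have : pos b (j + 1) = pos (fun i => b (i + 1)) j + (1 + b 0) :=
          Finset.sum_range_succ' _ _
        omega
      rw [hpos]
      have hlen : (((a 0 : ℤ) + 3) :: List.replicate (b 0) 2).length = 1 + b 0 := by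
        simp; omega
      rw [show (1 + b 0) + (pos (fun i => b (i + 1)) j + r) =
        (((a 0 : ℤ) + 3) :: List.replicate (b 0) 2).length + (pos (fun i => b (i + 1)) j + r)
        from by rw [hlen]]
      rw [List.getD_append_right _ _ _ _ (Nat.le_add_right _ _), Nat.add_sub_cancel_left]
      exact ih k (fun i => a (i + 1)) (fun i => b (i + 1)) r (by omega) hr

lemma exists_block (b : ℕ → ℕ) : ∀ (j m : ℕ), m < pos b j →
    ∃ i, i < j ∧ ∃ r, r ≤ b i ∧ m = pos b i + r := by
  intro j
  induction j with
  | zero => intro m hm; simp [pos_zero] at hm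
  | succ j ih =>
    intro m hm
    by_cases h : m < pos b j
    · obtain ⟨i, hi, r, hr, he⟩ := ih m h
      exact ⟨i, by omega, r, hr, he⟩
    · rw [pos_succ] at hm
      exact ⟨j, by omega, m - pos b j, by omega, by omega⟩


/-- periodic extension of `b` with period `k+1` -/
def Bf (k : ℕ) (b : ℕ → ℕ) : ℕ → ℕ := fun i => b (i % (k + 1))

lemma Bf_lt {k : ℕ} (b : ℕ → ℕ) {i : ℕ} (h : i < k + 1) : Bf k b i = b i := by
  simp [Bf, Nat.mod_eq_of_lt h]

lemma Bf_period (k : ℕ) (b : ℕ → ℕ) (i : ℕ) : Bf k b (i + (k + 1)) = Bf k b i := by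
  simp [Bf, Nat.add_mod_right]

lemma period_iterate {f : ℕ → ℕ} {t : ℕ} (h : ∀ i, f (i + t) = f i) :
    ∀ (m i : ℕ), f (i + m * t) = f i := by
  intro m
  induction m with
  | zero => simp
  | succ m ih =>
    intro i
    have : i + (m + 1) * t = (i + m * t) + t := by ring
    rw [this, h, ih]

lemma posB_eq (k : ℕ) (b : ℕ → ℕ) {j : ℕ} (hj : j ≤ k + 1) :
    pos (Bf k b) j = pos b j :=
  Finset.sum_congr rfl fun i hi => by
    rw [Bf_lt b (lt_of_lt_of_le (Finset.mem_range.mp hi) hj)]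

lemma posB_add_mul (k : ℕ) (b : ℕ → ℕ) (x m : ℕ) :
    pos (Bf k b) (x + m * (k + 1)) = pos (Bf k b) x + m * pos b (k + 1) := by
  rw [Nat.add_comm x (m * (k+1)), pos_add (period_iterate (Bf_period k b) m),
    pos_mul (Bf_period k b), posB_eq k b le_rfl]
  ring

lemma cyc_val (k : ℕ) (a b : ℕ → ℕ) (j r : ℕ) (hr : r ≤ Bf k b j) :
    cyc (cycleBlocks k a b) (pos (Bf k b) j + r) =
      if r = 0 then (Bf k a j : ℤ) + 3 else 2 := by
  have hlen : (cycleBlocks k a b).length = pos b (k + 1) := length_cycleBlocks k a b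
  have hjm : j % (k + 1) < k + 1 := Nat.mod_lt _ (Nat.succ_pos k)
  have hdecomp : pos (Bf k b) j = pos b (j % (k + 1)) + (j / (k + 1)) * pos b (k + 1) := by
    conv_lhs => rw [show j = j % (k + 1) + (j / (k + 1)) * (k + 1) from (Nat.mod_add_div' j (k+1)).symm]
    rw [posB_add_mul, posB_eq k b (le_of_lt hjm)]
  have hr' : r ≤ b (j % (k + 1)) := hr
  have hlt : pos b (j % (k + 1)) + r < pos b (k + 1) := by
    have h1 : pos b (j % (k + 1)) + r < pos b (j % (k + 1) + 1) := by
      rw [pos_succ]; omega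
    exact lt_of_lt_of_le h1 (pos_mono b hjm)
  have hmod : (pos (Bf k b) j + r) % (cycleBlocks k a b).length = pos b (j % (k + 1)) + r := by
    rw [hlen, hdecomp, show pos b (j % (k+1)) + j / (k+1) * pos b (k+1) + r
        = pos b (j % (k+1)) + r + j / (k+1) * pos b (k+1) from by ring,
      Nat.add_mul_mod_self_right, Nat.mod_eq_of_lt hlt]
  show (cycleBlocks k a b).getD _ 0 = _
  rw [hmod, getD_cycleBlocks (j % (k+1)) k a b r (by omega) hr']
  rfl

lemma cyc_val0 (k : ℕ) (a b : ℕ → ℕ) (j : ℕ) :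
    cyc (cycleBlocks k a b) (pos (Bf k b) j) = (Bf k a j : ℤ) + 3 := by
  have := cyc_val k a b j 0 (Nat.zero_le _)
  simpa using this

lemma cyc_reduce (c : List ℤ) (m x : ℕ) :
    cyc c (m % c.length + x) = cyc c (m + x) := by
  show c.getD _ 0 = c.getD _ 0
  congr 1
  conv_rhs => rw [Nat.add_mod]
  conv_lhs => rw [Nat.add_mod, Nat.mod_mod_of_dvd _ dvd_rfl]

lemma period_of_tper (k : ℕ) (a b : ℕ → ℕ) (t : ℕ)
    (hA : ∀ i, Bf k a (i + t) = Bf k a i) (hB : ∀ i, Bf k b (i + t) = Bf k b i) (m : ℕ) :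
    cyc (cycleBlocks k a b) (m + pos (Bf k b) t) = cyc (cycleBlocks k a b) m := by
  have hlen : (cycleBlocks k a b).length = pos b (k + 1) := length_cycleBlocks k a b
  have hmlt : m % (cycleBlocks k a b).length < pos b (k + 1) := by
    rw [← hlen]
    exact Nat.mod_lt _ (by rw [hlen]; have := le_pos b (k+1); omega)
  obtain ⟨i, hik, r, hr, he⟩ := exists_block b (k + 1) _ hmlt
  have hBi : Bf k b i = b i := Bf_lt b hik
  have he' : m % (cycleBlocks k a b).length = pos (Bf k b) i + r := by
    rw [he, posB_eq k b (le_of_lt hik)]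
  have hshift : pos (Bf k b) i + r + pos (Bf k b) t = pos (Bf k b) (i + t) + r := by
    rw [Nat.add_comm i t, pos_add hB]; ring
  calc cyc (cycleBlocks k a b) (m + pos (Bf k b) t)
      = cyc (cycleBlocks k a b) (m % (cycleBlocks k a b).length + pos (Bf k b) t) :=
        (cyc_reduce _ m _).symm
    _ = cyc (cycleBlocks k a b) (pos (Bf k b) (i + t) + r) := by rw [he', hshift]
    _ = if r = 0 then (Bf k a (i + t) : ℤ) + 3 else 2 :=
        cyc_val k a b (i + t) r (by rw [hB]; rw [hBi]; exact hr)
    _ = if r = 0 then (Bf k a i : ℤ) + 3 else 2 := by rw [hA]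
    _ = cyc (cycleBlocks k a b) (pos (Bf k b) i + r) :=
        (cyc_val k a b i r (by rw [hBi]; exact hr)).symm
    _ = cyc (cycleBlocks k a b) (m % (cycleBlocks k a b).length + 0) := by rw [he', Nat.add_zero]
    _ = cyc (cycleBlocks k a b) m := by rw [cyc_reduce, Nat.add_zero]


lemma tper_of_period (k : ℕ) (a b : ℕ → ℕ) (p : ℕ) (hp : 0 < p)
    (hper : ∀ m, cyc (cycleBlocks k a b) (m + p) = cyc (cycleBlocks k a b) m) :
    ∃ t, 0 < t ∧ (∀ i, Bf k a (i + t) = Bf k a i ∧ Bf k b (i + t) = Bf k b i) ∧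
      pos (Bf k b) t = p := by
  set c := cycleBlocks k a b with hc
  have hlen : c.length = pos b (k + 1) := length_cycleBlocks k a b
  have hnpos : 0 < c.length := by rw [hlen]; have := le_pos b (k + 1); omega
  -- p % n is a block start
  have hplt : p % c.length < pos b (k + 1) := by rw [← hlen]; exact Nat.mod_lt _ hnpos
  obtain ⟨i, hik, r, hr, he⟩ := exists_block b (k + 1) _ hplt
  have hc0 : cyc c 0 = (a 0 : ℤ) + 3 := by
    have := cyc_val k a b 0 0 (Nat.zero_le _)
    simpa [pos_zero, Bf] using this
  have hcp : cyc c p = (a 0 : ℤ) + 3 := by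
    have := hper 0; rw [Nat.zero_add] at this; rw [this, hc0]
  have hcp' : cyc c p = if r = 0 then (a i : ℤ) + 3 else 2 := by
    show c.getD _ 0 = _
    rw [he, getD_cycleBlocks i k a b r (by omega) hr]
  have hr0 : r = 0 := by
    by_contra h
    rw [hcp', if_neg h] at hcp
    omega
  -- define t
  set t := i + (p / c.length) * (k + 1) with ht
  have hpt : pos (Bf k b) t = p := by
    rw [ht, posB_add_mul, posB_eq k b (le_of_lt hik), ← hlen]
    rw [hr0, Nat.add_zero] at he
    rw [← he]
    rw [Nat.add_comm, Nat.mul_comm, Nat.div_add_mod]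
  have htpos : 0 < t := by
    rcases Nat.eq_zero_or_pos t with h | h
    · rw [h] at hpt; rw [pos_zero] at hpt; omega
    · exact h
  -- step lemma
  have step : ∀ i', pos (Bf k b) (i' + t) = pos (Bf k b) i' + p →
      Bf k a (i' + t) = Bf k a i' ∧ Bf k b (i' + t) = Bf k b i' := by
    intro i' E
    have hA : Bf k a (i' + t) = Bf k a i' := by
      have h1 : cyc c (pos (Bf k b) i' + p) = cyc c (pos (Bf k b) i') := hper _
      rw [← E] at h1
      rw [cyc_val0, cyc_val0] at h1
      omega
    refine ⟨hA, ?_⟩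
    rcases lt_trichotomy (Bf k b i') (Bf k b (i' + t)) with hlt | heq | hgt
    · exfalso
      set r := Bf k b i' + 1 with hrr
      have h2 : cyc c (pos (Bf k b) i' + r + p) = cyc c (pos (Bf k b) i' + r) := hper _
      have hidx : pos (Bf k b) i' + r + p = pos (Bf k b) (i' + t) + r := by omega
      rw [hidx] at h2
      rw [cyc_val k a b (i' + t) r (by omega)] at h2
      have hidx2 : pos (Bf k b) i' + r = pos (Bf k b) (i' + 1) := by
        rw [pos_succ]; omega
      rw [hidx2, cyc_val0] at h2
      simp only [if_neg (by omega : r ≠ 0)] at h2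
      omega
    · exact heq.symm
    · exfalso
      set r := Bf k b (i' + t) + 1 with hrr
      have h2 : cyc c (pos (Bf k b) i' + r + p) = cyc c (pos (Bf k b) i' + r) := hper _
      have hidx : pos (Bf k b) i' + r + p = pos (Bf k b) (i' + t + 1) := by
        rw [pos_succ]; omega
      rw [hidx] at h2
      rw [cyc_val0] at h2
      rw [cyc_val k a b i' r (by omega)] at h2
      simp only [if_neg (by omega : r ≠ 0)] at h2
      omega
  have key : ∀ i', pos (Bf k b) (i' + t) = pos (Bf k b) i' + p := by
    intro i'
    induction i' with
    | zero => rw [Nat.zero_add, pos_zero, Nat.zero_add, hpt]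
    | succ i' ih =>
      have hB := (step i' ih).2
      have : i' + 1 + t = (i' + t) + 1 := by ring
      rw [this, pos_succ, pos_succ, hB, ih]
      ring
  exact ⟨t, htpos, fun i' => step i' (key i'), hpt⟩

/-- the set of block-level periods -/
def tset (k : ℕ) (a b : ℕ → ℕ) : Set ℕ :=
  {t | 0 < t ∧ ∀ i, Bf k a (i + t) = Bf k a i ∧ Bf k b (i + t) = Bf k b i}

lemma K_mem_tset (k : ℕ) (a b : ℕ → ℕ) : (k + 1) ∈ tset k a b :=
  ⟨Nat.succ_pos k, fun i => ⟨Bf_period k a i, Bf_period k b i⟩⟩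

lemma tset_comm (k : ℕ) (a b : ℕ → ℕ) : tset k a b = tset k b a := by
  ext t
  exact ⟨fun ⟨h1, h2⟩ => ⟨h1, fun i => ⟨(h2 i).2, (h2 i).1⟩⟩,
    fun ⟨h1, h2⟩ => ⟨h1, fun i => ⟨(h2 i).2, (h2 i).1⟩⟩⟩

lemma main (k : ℕ) (a b : ℕ → ℕ) :
    minPeriod (cycleBlocks k a b) ∣ (cycleBlocks k a b).length ∧
    (cycleBlocks k a b).length / minPeriod (cycleBlocks k a b) =
      (k + 1) / sInf (tset k a b) := by
  set t₀ := sInf (tset k a b) with ht₀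
  have hmem : t₀ ∈ tset k a b := Nat.sInf_mem ⟨k + 1, K_mem_tset k a b⟩
  obtain ⟨ht₀pos, ht₀per⟩ := hmem
  have hAper : ∀ i, Bf k a (i + t₀) = Bf k a i := fun i => (ht₀per i).1
  have hBper : ∀ i, Bf k b (i + t₀) = Bf k b i := fun i => (ht₀per i).2
  -- t₀ ∣ k+1
  have hdvd : t₀ ∣ (k + 1) := by
    by_contra h
    have hmod : (k + 1) % t₀ ≠ 0 := fun hz => h (Nat.dvd_of_mod_eq_zero hz)
    have hmem' : (k + 1) % t₀ ∈ tset k a b := by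
      refine ⟨Nat.pos_of_ne_zero hmod, fun i => ?_⟩
      have hsum : (k + 1) % t₀ + t₀ * ((k + 1) / t₀) = k + 1 := Nat.mod_add_div _ _
      constructor
      · have := period_iterate hAper ((k + 1) / t₀) (i + (k + 1) % t₀)
        rw [Nat.mul_comm] at hsum
        rw [show i + (k+1) % t₀ + (k+1)/t₀ * t₀ = i + (k+1) from by omega] at this
        rw [← this, Bf_period]
      · have := period_iterate hBper ((k + 1) / t₀) (i + (k + 1) % t₀)
        rw [Nat.mul_comm] at hsum
        rw [show i + (k+1) % t₀ + (k+1)/t₀ * t₀ = i + (k+1) from by omega] at this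
        rw [← this, Bf_period]
    have hle : t₀ ≤ (k + 1) % t₀ := Nat.sInf_le hmem'
    have : (k + 1) % t₀ < t₀ := Nat.mod_lt _ ht₀pos
    omega
  -- minPeriod = pos (Bf k b) t₀
  set P := pos (Bf k b) t₀ with hP
  have hPpos : 0 < P := lt_of_lt_of_le ht₀pos (le_pos _ _)
  have hPmem : P ∈ {p : ℕ | 0 < p ∧ ∀ i : ℕ, cyc (cycleBlocks k a b) (i + p) =
      cyc (cycleBlocks k a b) i} :=
    ⟨hPpos, fun i => period_of_tper k a b t₀ hAper hBper i⟩
  have hlb : ∀ p ∈ {p : ℕ | 0 < p ∧ ∀ i : ℕ, cyc (cycleBlocks k a b) (i + p) =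
      cyc (cycleBlocks k a b) i}, P ≤ p := by
    rintro p ⟨hp, hper⟩
    obtain ⟨t, htpos, htper, hpt⟩ := tper_of_period k a b p hp hper
    have : t₀ ≤ t := Nat.sInf_le ⟨htpos, htper⟩
    rw [← hpt]
    exact pos_mono _ this
  have hminP : minPeriod (cycleBlocks k a b) = P := by
    unfold minPeriod
    exact le_antisymm (Nat.sInf_le hPmem) (hlb _ (Nat.sInf_mem ⟨P, hPmem⟩))
  -- length = (K / t₀) * P
  have hlen : (cycleBlocks k a b).length = ((k + 1) / t₀) * P := by
    calc (cycleBlocks k a b).length = pos (Bf k b) (k + 1) := by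
          rw [length_cycleBlocks, posB_eq k b le_rfl]
      _ = pos (Bf k b) (((k + 1) / t₀) * t₀) := by rw [Nat.div_mul_cancel hdvd]
      _ = ((k + 1) / t₀) * P := pos_mul hBper _
  constructor
  · rw [hminP, hlen]; exact dvd_mul_left P _
  · rw [hminP, hlen, Nat.mul_div_cancel _ hPpos]

end DualAux

theorem minimal_periods_of_dual_cycles (k : ℕ) (a b : ℕ → ℕ) :
    minPeriod (cycleBlocks k a b) ∣ (cycleBlocks k a b).length ∧
    minPeriod (cycleBlocks k b a) ∣ (cycleBlocks k b a).length ∧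
    (cycleBlocks k a b).length / minPeriod (cycleBlocks k a b) =
      (cycleBlocks k b a).length / minPeriod (cycleBlocks k b a) := by
  obtain ⟨h1, h2⟩ := DualAux.main k a b
  obtain ⟨h3, h4⟩ := DualAux.main k b a
  exact ⟨h1, h3, by rw [h2, h4, DualAux.tset_comm]⟩
end
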